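/- Identify ℂ² ⊗ ℂ⁴ with ℂ⁸ via the Kronecker ordering (e_{4a+b} = |a⟩⊗|b⟩ for a ∈ {0,1}, b ∈ {0,1,2,3}). Let Π be the orthogonal projection of ℂ⁸ onto the span of h₀ = (e₀ + e₇)/√2 and h₁ = (e₂ + e₅)/√2. Then for every 2×2 complex matrix A there exists c ∈ ℂ such that Π (A ⊗ I₄) Π = c Π; i.e., the qubit–ququart heterogeneous code detects every error supported on the qubit. -/

import Mathlib

/-- Kronecker product of a `2×2` and a `4×4` matrix realized on `ℂ⁸` via
`e_{4a+b} = |a⟩⊗|b⟩`. -/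
noncomputable def kron24 (A : Matrix (Fin 2) (Fin 2) ℂ) (B : Matrix (Fin 4) (Fin 4) ℂ) :
    Matrix (Fin 8) (Fin 8) ℂ :=
  Matrix.of fun r c =>
    A ⟨(r : ℕ) / 4, by have := r.isLt; omega⟩ ⟨(c : ℕ) / 4, by have := c.isLt; omega⟩ *
    B ⟨(r : ℕ) % 4, by omega⟩ ⟨(c : ℕ) % 4, by omega⟩

/-- The codeword `h₀ = (|00⟩ + |13⟩)/√2 = (e₀ + e₇)/√2`. -/
noncomputable def h0 : Fin 8 → ℂ :=
  (Real.sqrt 2 : ℂ)⁻¹ • (Pi.single (0 : Fin 8) (1 : ℂ) + Pi.single (7 : Fin 8) (1 : ℂ))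

/-- The codeword `h₁ = (|02⟩ + |11⟩)/√2 = (e₂ + e₅)/√2`. -/
noncomputable def h1 : Fin 8 → ℂ :=
  (Real.sqrt 2 : ℂ)⁻¹ • (Pi.single (2 : Fin 8) (1 : ℂ) + Pi.single (5 : Fin 8) (1 : ℂ))

/-! A Hermitian idempotent is determined by its range, so `Π = V Vᴴ` for the isometry `V` with
columns `h₀, h₁`, and then `Π E Π = V (Vᴴ E V) Vᴴ`. For `E = A ⊗ I₄` the compression `Vᴴ E V` is
`((A₀₀ + A₁₁)/2) • 1`: the error never changes the ququart label, the four basis states occurring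
in `h₀, h₁` have distinct ququart labels, and each codeword puts weight `1/2` on each qubit value. -/

namespace Matrix

variable {R m n : Type*} [CommRing R] [Fintype m] [Fintype n]

theorem mul_eq_self_of_range_le {P : Matrix m m R} {M : Matrix m n R} (hP : P * P = P)
    (hM : LinearMap.range M.mulVecLin ≤ LinearMap.range P.mulVecLin) : P * M = M := by
  have hidem : IsIdempotentElem P.mulVecLin := by
    rw [IsIdempotentElem, Module.End.mul_eq_comp, ← mulVecLin_mul, hP]
  rw [ext_iff_mulVec]
  intro v
  rw [← mulVec_mulVec]
  exact LinearMap.IsIdempotentElem.mem_range_iff hidem |>.mp (hM ⟨v, rfl⟩)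

theorem IsHermitian.eq_mul_conjTranspose_of_range_eq [StarRing R] [DecidableEq n]
    {P : Matrix m m R} {U : Matrix m n R} (hP : P.IsHermitian) (hPP : P * P = P)
    (hU : Uᴴ * U = 1) (hrange : LinearMap.range P.mulVecLin = LinearMap.range U.mulVecLin) :
    P = U * Uᴴ := by
  have hPU : P * U = U := mul_eq_self_of_range_le hPP hrange.ge
  have hUU_idem : U * Uᴴ * (U * Uᴴ) = U * Uᴴ := by
    rw [Matrix.mul_assoc, ← Matrix.mul_assoc Uᴴ, hU, Matrix.one_mul]
  have hrange_UU : LinearMap.range U.mulVecLin ≤ LinearMap.range (U * Uᴴ).mulVecLin := by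
    calc LinearMap.range U.mulVecLin = LinearMap.range (U * Uᴴ * U).mulVecLin := by
          rw [Matrix.mul_assoc, hU, Matrix.mul_one]
      _ ≤ _ := by rw [mulVecLin_mul]; exact LinearMap.range_comp_le_range _ _
  have hUUP : U * Uᴴ * P = P := mul_eq_self_of_range_le hUU_idem (hrange.le.trans hrange_UU)
  calc P = (U * Uᴴ * P)ᴴ := by rw [hUUP, hP.eq]
    _ = P * (U * Uᴴ) := by
      rw [conjTranspose_mul, hP.eq, conjTranspose_mul, conjTranspose_conjTranspose]
    _ = U * Uᴴ := by rw [← Matrix.mul_assoc, hPU]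

theorem mul_conjTranspose_mul_mul_conjTranspose [StarRing R] [DecidableEq n]
    {U : Matrix m n R} {E : Matrix m m R} {c : R} (hE : Uᴴ * E * U = c • 1) :
    U * Uᴴ * E * (U * Uᴴ) = c • (U * Uᴴ) := by
  calc U * Uᴴ * E * (U * Uᴴ) = U * (Uᴴ * E * U) * Uᴴ := by simp only [Matrix.mul_assoc]
    _ = c • (U * Uᴴ) := by rw [hE, Matrix.mul_smul, Matrix.mul_one, Matrix.smul_mul]

end Matrix

open Matrix

noncomputable def encoder : Matrix (Fin 8) (Fin 2) ℂ := (of ![h0, h1])ᵀ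

theorem range_encoder : LinearMap.range encoder.mulVecLin = Submodule.span ℂ {h0, h1} := by
  rw [range_mulVecLin, encoder, col, transpose_transpose]
  exact congrArg _ (range_cons_cons_empty h0 h1 ![])

theorem inv_sqrt_two_mul_self : (Real.sqrt 2 : ℂ)⁻¹ * (Real.sqrt 2 : ℂ)⁻¹ = 2⁻¹ := by
  rw [← mul_inv, ← Complex.ofReal_mul, Real.mul_self_sqrt zero_le_two, Complex.ofReal_ofNat]

theorem encoder_conjTranspose_mul_mul (M : Matrix (Fin 8) (Fin 8) ℂ) :
    encoderᴴ * M * encoder = (2⁻¹ : ℂ) •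
      !![M 0 0 + M 0 7 + M 7 0 + M 7 7, M 0 2 + M 0 5 + M 7 2 + M 7 5;
         M 2 0 + M 2 7 + M 5 0 + M 5 7, M 2 2 + M 2 5 + M 5 2 + M 5 5] := by
  ext i j
  fin_cases i <;> fin_cases j <;>
  simp [encoder, h0, h1, mul_apply, Pi.single_apply, Fin.sum_univ_eight, ← mul_add,
    mul_right_comm _ _ (Real.sqrt 2 : ℂ)⁻¹, inv_sqrt_two_mul_self, add_assoc, add_left_comm]

theorem encoder_conjTranspose_mul_self : encoderᴴ * encoder = 1 := by
  rw [← Matrix.mul_one encoderᴴ, encoder_conjTranspose_mul_mul]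
  ext i j
  fin_cases i <;> fin_cases j <;> norm_num [one_apply, Fin.ext_iff]

theorem encoder_conjTranspose_mul_kron24_mul (A : Matrix (Fin 2) (Fin 2) ℂ) :
    encoderᴴ * kron24 A 1 * encoder = ((A 0 0 + A 1 1) / 2) • 1 := by
  rw [encoder_conjTranspose_mul_mul]
  ext i j
  fin_cases i <;> fin_cases j <;> simp [kron24, one_apply, add_comm, div_eq_inv_mul]

/-- The qubit–ququart heterogeneous code spanned by `h₀, h₁` detects every error
supported on the qubit: for every `2×2` matrix `A` there is `c ∈ ℂ` with
`Π (A ⊗ I₄) Π = c Π`.  Here `Pr` is the orthogonal projection of `ℂ⁸` onto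
`span{h₀, h₁}`. -/
theorem qubit_ququart_code_detects_qubit_errors
    (Pr : Matrix (Fin 8) (Fin 8) ℂ)
    (hsa : Pr.IsHermitian) (hidem : Pr * Pr = Pr)
    (hrange : LinearMap.range Pr.mulVecLin = Submodule.span ℂ {h0, h1}) :
    ∀ A : Matrix (Fin 2) (Fin 2) ℂ, ∃ c : ℂ, Pr * kron24 A 1 * Pr = c • Pr := by
  intro A
  have hPr : Pr = encoder * encoderᴴ :=
    hsa.eq_mul_conjTranspose_of_range_eq hidem encoder_conjTranspose_mul_self
      (hrange.trans range_encoder.symm)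
  rw [hPr]
  exact ⟨_, mul_conjTranspose_mul_mul_conjTranspose (encoder_conjTranspose_mul_kron24_mul A)⟩
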